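/- arXiv:0810.5487 — 2 statements merged into one kernel-verified Lean document; each statement's English description precedes it below -/
import Mathlib

section
/- Let d ≥ 0 and i ≥ 1 be integers, and let h ∈ ℚ[t]. If there exist nonnegative rational numbers g_0, …, g_{⌊(d+1)/2⌋} with h(t) = ∑_{j=0}^{⌊(d+1)/2⌋} g_j · t^j · P_{d−2j,i}(t), then there exist nonnegative rational numbers g'_0, …, g'_{⌊(d+1)/2⌋} with h(t) = ∑_{j=0}^{⌊(d+1)/2⌋} g'_j · t^j · P_{d−2j,i+1}(t). -/
open Polynomial Finset

/-- The polynomial `P_{d,i}(t)`, here with rational coefficients: `P_{d,i} = 1` for `d < 0`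
(in particular `P_{-1,i} = 1`), and for `d ≥ 0`,
`P_{d,i} = (1 + t + ⋯ + t^i)^q (1 + t + ⋯ + t^r)` where `q ≥ 0` and `1 ≤ r ≤ i` are the
unique integers with `d + 1 = q·i + r` (for `i ≥ 1`, `q = ⌊d/i⌋` and `r = (d mod i) + 1`). -/
noncomputable def Ppoly (d : ℤ) (i : ℕ) : ℚ[X] :=
  if d < 0 then 1
  else (∑ k ∈ range (i + 1), X ^ k) ^ (d.toNat / i) *
    (∑ k ∈ range (d.toNat % i + 2), X ^ k)

/-!
Write `[n] = 1 + t + ⋯ + t^(n-1)`, so that `P_{d,m} = [m+1]^q [r+1]`. The cone of nonnegative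
combinations of `B_{d,m}` is mapped into the cone for `B_{d+2,m}` by multiplication by `t`, and,
for `1 ≤ s ≤ m + 1`, into the cone for `B_{d+s-1,m}` by multiplication by `[s]`. The latter
reduces to `[s] P_{e,m}`, which is handled by induction on `s` using the identity
`[c+a][c+b] = [c][c+a+b] + t^c [a][b]`. As `P_{d,i}` is a product of factors `[i+1]` and
`[r+1]` with `r < i`, all of size at most `(i+1) + 1`, each element of `B_{d,i}` lies in the cone
of `B_{d,i+1}`.
-/

noncomputable def geomSum (n : ℕ) : ℚ[X] := ∑ k ∈ range n, X ^ k

lemma geomSum_one : geomSum 1 = 1 := by simp [geomSum]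

lemma geomSum_add_mul_geomSum_add (a b c : ℕ) :
    geomSum (c + a) * geomSum (c + b) =
      geomSum c * geomSum (c + a + b) + X ^ c * (geomSum a * geomSum b) := by
  have hX : (X - 1 : ℚ[X]) ^ 2 ≠ 0 := pow_ne_zero 2 (X_sub_C_ne_zero 1)
  have hgeom (n : ℕ) : geomSum n * (X - 1) = X ^ n - 1 := geom_sum_mul X n
  apply mul_right_cancel₀ hX
  calc geomSum (c + a) * geomSum (c + b) * (X - 1) ^ 2
      = (geomSum (c + a) * (X - 1)) * (geomSum (c + b) * (X - 1)) := by ring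
    _ = (geomSum c * (X - 1)) * (geomSum (c + a + b) * (X - 1)) +
          X ^ c * ((geomSum a * (X - 1)) * (geomSum b * (X - 1))) := by
      simp only [hgeom, pow_add]; ring
    _ = _ := by ring

/-- `P_{n-1,m}`, indexed by its degree `n` so that all indices stay in `ℕ`. -/
noncomputable def Pdeg (n m : ℕ) : ℚ[X] := Ppoly ((n : ℤ) - 1) m

lemma Pdeg_zero (m : ℕ) : Pdeg 0 m = 1 := by simp [Pdeg, Ppoly]

lemma Pdeg_succ (n m : ℕ) :
    Pdeg (n + 1) m = geomSum (m + 1) ^ (n / m) * geomSum (n % m + 2) := by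
  simp [Pdeg, Ppoly, geomSum]

lemma Pdeg_of_le {n m : ℕ} (h : n ≤ m) : Pdeg n m = geomSum (n + 1) := by
  rcases n with _ | n
  · rw [Pdeg_zero, geomSum_one]
  · rw [Pdeg_succ, Nat.div_eq_of_lt (by omega), Nat.mod_eq_of_lt (by omega), pow_zero, one_mul]

lemma Pdeg_add_self (n m : ℕ) : Pdeg (n + m) m = geomSum (m + 1) * Pdeg n m := by
  rcases Nat.eq_zero_or_pos m with rfl | hm
  · rw [zero_add, geomSum_one, one_mul, add_zero]
  rcases n with _ | n
  · rw [zero_add, Pdeg_of_le le_rfl, Pdeg_zero, mul_one]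
  · rw [show n + 1 + m = n + m + 1 by omega, Pdeg_succ, Pdeg_succ, Nat.add_div_right _ hm,
      Nat.add_mod_right, pow_succ]
    ring

lemma Pdeg_mul_add {m r : ℕ} (hr : r ≤ m) (q : ℕ) :
    Pdeg (q * m + r) m = geomSum (m + 1) ^ q * geomSum (r + 1) := by
  induction q with
  | zero => simp [Pdeg_of_le hr]
  | succ q ih => rw [add_mul, one_mul, add_right_comm, Pdeg_add_self, ih, pow_succ]; ring

/-- The polynomials whose `g`-vector with respect to `B_{n-1,m}` is nonnegative. -/
noncomputable def gCone (m n : ℕ) : PointedCone ℚ ℚ[X] :=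
  PointedCone.hull ℚ ((fun j => X ^ j * Pdeg (n - 2 * j) m) '' Set.Iic (n / 2))

lemma X_pow_mul_Pdeg_mem_gCone {m n j : ℕ} (hj : 2 * j ≤ n) :
    X ^ j * Pdeg (n - 2 * j) m ∈ gCone m n :=
  PointedCone.subset_hull ⟨j, by simp only [Set.mem_Iic]; omega, rfl⟩

lemma Pdeg_mem_gCone (m n : ℕ) : Pdeg n m ∈ gCone m n := by
  simpa using X_pow_mul_Pdeg_mem_gCone (m := m) (n := n) (j := 0) (Nat.zero_le n)

lemma mul_mem_gCone {m n n' : ℕ} (a : ℚ[X])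
    (ha : ∀ j, 2 * j ≤ n → a * (X ^ j * Pdeg (n - 2 * j) m) ∈ gCone m n') {p : ℚ[X]}
    (hp : p ∈ gCone m n) : a * p ∈ gCone m n' := by
  induction hp using Submodule.span_induction with
  | mem _ hx =>
    obtain ⟨j, hj, rfl⟩ := hx
    exact ha j (by simp only [Set.mem_Iic] at hj; omega)
  | zero => simp
  | add _ _ _ _ hx hy => rw [mul_add]; exact add_mem hx hy
  | smul c _ _ hx => rw [mul_smul_comm]; exact Submodule.smul_mem _ c hx

lemma X_pow_mul_mem_gCone {m n : ℕ} (c : ℕ) {p : ℚ[X]} (hp : p ∈ gCone m n) :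
    X ^ c * p ∈ gCone m (n + 2 * c) := by
  refine mul_mem_gCone _ (fun j hj => ?_) hp
  rw [← mul_assoc, ← pow_add, show n - 2 * j = n + 2 * c - 2 * (c + j) by omega]
  exact X_pow_mul_Pdeg_mem_gCone (by omega)

lemma C_mul_mem_gCone {m n : ℕ} {c : ℚ} (hc : 0 ≤ c) {p : ℚ[X]} (hp : p ∈ gCone m n) :
    C c * p ∈ gCone m n := by
  rw [C_mul']
  exact (gCone m n).smul_mem hc hp

lemma exists_nonneg_coeffs_of_mem_gCone {m n : ℕ} {p : ℚ[X]} (hp : p ∈ gCone m n) :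
    ∃ g : ℕ → ℚ, (∀ j, 0 ≤ g j) ∧
      p = ∑ j ∈ range (n / 2 + 1), C (g j) * X ^ j * Pdeg (n - 2 * j) m := by
  obtain ⟨l, hl, rfl⟩ := (Finsupp.mem_span_image_iff_linearCombination _).mp hp
  refine ⟨fun j => l j, fun j => (l j).2, ?_⟩
  have hsupp : l.support ⊆ range (n / 2 + 1) := fun j hj => by
    have := hl hj
    simp only [Set.mem_Iic] at this
    simp only [mem_range]; omega
  rw [Finsupp.linearCombination_apply, Finsupp.sum_of_support_subset l hsupp _ (by simp)]
  refine sum_congr rfl fun j _ => ?_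
  rw [mul_assoc, C_mul']
  rfl

lemma geomSum_mul_Pdeg_mem_gCone {m s : ℕ} (hs : 1 ≤ s) (hsm : s ≤ m + 1) (n : ℕ) :
    geomSum s * Pdeg n m ∈ gCone m (n + s - 1) := by
  induction s using Nat.strong_induction_on generalizing n with
  | _ s ih =>
  rcases (by omega : s = 1 ∨ s = m + 1 ∨ 2 ≤ s ∧ s ≤ m) with rfl | rfl | ⟨hs2, hs_le⟩
  · simpa [geomSum_one] using Pdeg_mem_gCone m n
  · rw [← Pdeg_add_self, show n + (m + 1) - 1 = n + m by omega]
    exact Pdeg_mem_gCone m (n + m)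
  obtain ⟨q, r, hr, rfl⟩ : ∃ q r, r < m ∧ n = q * m + r :=
    ⟨n / m, n % m, Nat.mod_lt _ (by omega), (Nat.div_add_mod' n m).symm⟩
  rw [Pdeg_mul_add hr.le]
  rcases Nat.eq_zero_or_pos r with rfl | hr0
  · have h := Pdeg_mem_gCone m (q * m + (s - 1))
    rw [Pdeg_mul_add (by omega), Nat.sub_add_cancel hs] at h
    rwa [zero_add, geomSum_one, mul_one, show q * m + 0 + s - 1 = q * m + (s - 1) by omega,
      mul_comm (geomSum s)]
  -- Split `[s][r+1]` at `c`, chosen so that both products on the right have lower `s`-index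
  -- and the first one is again a `Pdeg` after multiplying by `[m+1]^q`.
  set c := max 1 (s + r - m)
  have hsplit := geomSum_add_mul_geomSum_add (s - c) (r - c + 1) c
  rw [show c + (s - c) + (r - c + 1) = s + r - c + 1 by omega, show c + (s - c) = s by omega,
    show c + (r - c + 1) = r + 1 by omega] at hsplit
  have hlow := ih c (by omega) (by omega) (by omega) (q * m + (s + r - c))
  have hhigh := X_pow_mul_mem_gCone c
    (ih (s - c) (by omega) (by omega) (by omega) (q * m + (r - c)))
  rw [Pdeg_mul_add (by omega)] at hlow hhigh
  have hprod : geomSum s * (geomSum (m + 1) ^ q * geomSum (r + 1)) =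
      geomSum c * (geomSum (m + 1) ^ q * geomSum (s + r - c + 1)) +
        X ^ c * (geomSum (s - c) * (geomSum (m + 1) ^ q * geomSum (r - c + 1))) := by
    linear_combination geomSum (m + 1) ^ q * hsplit
  rw [hprod]
  refine add_mem ?_ ?_
  · convert hlow using 2; omega
  · convert hhigh using 2; omega

lemma geomSum_mul_mem_gCone {m s n : ℕ} (hs : 1 ≤ s) (hsm : s ≤ m + 1) {p : ℚ[X]}
    (hp : p ∈ gCone m n) : geomSum s * p ∈ gCone m (n + s - 1) := by
  refine mul_mem_gCone _ (fun j hj => ?_) hp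
  rw [mul_left_comm]
  convert X_pow_mul_mem_gCone j (geomSum_mul_Pdeg_mem_gCone hs hsm (n - 2 * j)) using 2
  omega

lemma Pdeg_mem_gCone_succ {i : ℕ} (hi : 1 ≤ i) (n : ℕ) : Pdeg n i ∈ gCone (i + 1) n := by
  obtain ⟨q, r, hr, rfl⟩ : ∃ q r, r < i ∧ n = q * i + r :=
    ⟨n / i, n % i, Nat.mod_lt _ hi, (Nat.div_add_mod' n i).symm⟩
  induction q with
  | zero =>
    have h := geomSum_mul_mem_gCone (s := r + 1) (by omega) (by omega) (Pdeg_mem_gCone (i + 1) 0)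
    rwa [Pdeg_zero, mul_one, show 0 + (r + 1) - 1 = r by omega, ← Pdeg_of_le hr.le,
      ← zero_add r, ← zero_mul i] at h
  | succ q ih =>
    rw [add_mul, one_mul, add_right_comm, Pdeg_add_self]
    have h := geomSum_mul_mem_gCone (s := i + 1) (by omega) (by omega) ih
    rwa [← add_assoc, Nat.add_sub_cancel] at h

/-- if `h ∈ ℚ[t]` is a nonnegative rational combination of the basis
`B_{d,i} = (t^j P_{d-2j,i})_{0 ≤ j ≤ ⌊(d+1)/2⌋}`, then it is also a nonnegative rational
combination of the basis `B_{d,i+1}`: i.e. `g^{(d,i)}(h) ≥ 0` implies `g^{(d,i+1)}(h) ≥ 0`. -/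
theorem g_vector_hierarchy (d i : ℕ) (hi : 1 ≤ i) (h : ℚ[X])
    (hg : ∃ g : ℕ → ℚ, (∀ j, 0 ≤ g j) ∧
      h = ∑ j ∈ range ((d + 1) / 2 + 1),
        C (g j) * X ^ j * Ppoly ((d : ℤ) - 2 * j) i) :
    ∃ g' : ℕ → ℚ, (∀ j, 0 ≤ g' j) ∧
      h = ∑ j ∈ range ((d + 1) / 2 + 1),
        C (g' j) * X ^ j * Ppoly ((d : ℤ) - 2 * j) (i + 1) := by
  obtain ⟨g, hg, rfl⟩ := hg
  have hPdeg {m : ℕ} : ∀ j ∈ range ((d + 1) / 2 + 1),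
      Ppoly ((d : ℤ) - 2 * j) m = Pdeg (d + 1 - 2 * j) m := fun j hj => by
    rw [mem_range] at hj
    rw [Pdeg, Nat.cast_sub (by omega)]
    push_cast
    ring_nf
  have hmem : ∑ j ∈ range ((d + 1) / 2 + 1), C (g j) * X ^ j * Ppoly ((d : ℤ) - 2 * j) i ∈
      gCone (i + 1) (d + 1) := by
    refine sum_mem fun j hj => ?_
    rw [hPdeg j hj, mul_assoc]
    refine C_mul_mem_gCone (hg j) ?_
    convert X_pow_mul_mem_gCone j (Pdeg_mem_gCone_succ hi (d + 1 - 2 * j)) using 2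
    rw [mem_range] at hj
    omega
  obtain ⟨g', hg', hsum⟩ := exists_nonneg_coeffs_of_mem_gCone hmem
  exact ⟨g', hg', hsum.trans (sum_congr rfl fun j hj => by rw [hPdeg j hj])⟩
end

section
/- Let d ≥ 0 and i ≥ 1 be integers. The family of polynomials t^j P_{d−2j,i}(t) for 0 ≤ j ≤ ⌊(d+1)/2⌋, viewed in ℚ[t], is linearly independent over ℚ, and its ℚ-linear span equals the set of polynomials h ∈ ℚ[t] of degree at most d + 1 satisfying t^{d+1} h(1/t) = h(t) (equivalently, the reversal of h with respect to degree d + 1 equals h). -/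
/-!
Call `p` palindromic of degree `n` if `deg p ≤ n` and `reflect n p = p`; these polynomials form a
subspace of dimension at most `⌊n/2⌋ + 1`, since such a `p` is determined by its coefficients of
degree `≤ n/2`. Palindromy is multiplicative (`reflect` of a product is the product of
`reflect`s), `1 + t + ⋯ + t^k` is palindromic of degree `k` and `t^j` of degree `2j`, so
`P_{e,i}` is palindromic of degree `q i + r = e + 1` and `t^j P_{d-2j,i}` of degree `d + 1`.
Since `P_{d-2j,i}(0) = 1`, palindromy forces `deg P_{d-2j,i} = d + 1 - 2j`, so the
`⌊(d+1)/2⌋ + 1` members `t^j P_{d-2j,i}` of the family have the distinct degrees `d + 1 - j`;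
hence they are independent and span the whole subspace.
-/

open Polynomial Finset

namespace Polynomial

section CommSemiring

variable {R : Type*} [CommSemiring R]

variable (R) in
noncomputable def palindromic (n : ℕ) : Submodule R R[X] where
  carrier := {p | p.degree ≤ n ∧ p.reflect n = p}
  zero_mem' := ⟨by simp, reflect_zero⟩
  add_mem' hp hq := ⟨degree_add_le_of_degree_le hp.1 hq.1, by rw [reflect_add, hp.2, hq.2]⟩
  smul_mem' c p hp := ⟨(degree_smul_le c p).trans hp.1, by
    rw [smul_eq_C_mul, reflect_C_mul, hp.2]⟩

theorem mul_mem_palindromic {m n : ℕ} {p q : R[X]} (hp : p ∈ palindromic R m)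
    (hq : q ∈ palindromic R n) : p * q ∈ palindromic R (m + n) := by
  refine ⟨(degree_mul_le p q).trans ?_, ?_⟩
  · exact_mod_cast add_le_add hp.1 hq.1
  · rw [reflect_mul p q (natDegree_le_iff_degree_le.mpr hp.1)
      (natDegree_le_iff_degree_le.mpr hq.1), hp.2, hq.2]

theorem X_pow_mem_palindromic (j : ℕ) : (X : R[X]) ^ j ∈ palindromic R (2 * j) := by
  refine ⟨degree_X_pow_le j |>.trans (by exact_mod_cast (by omega : j ≤ 2 * j)), ?_⟩
  rw [reflect_monomial, revAt_le (by omega), show 2 * j - j = j by omega]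

theorem pow_mem_palindromic {n : ℕ} {p : R[X]} (hp : p ∈ palindromic R n) (k : ℕ) :
    p ^ k ∈ palindromic R (k * n) := by
  induction k with
  | zero => simpa using X_pow_mem_palindromic (R := R) 0
  | succ k ih => simpa [pow_succ, add_mul] using mul_mem_palindromic ih hp

theorem geom_sum_X_mem_palindromic (n : ℕ) :
    ∑ k ∈ range (n + 1), (X : R[X]) ^ k ∈ palindromic R n := by
  refine ⟨(degree_sum_le _ _).trans (Finset.sup_le fun k hk => ?_), ?_⟩
  · exact (degree_X_pow_le k).trans (by exact_mod_cast Nat.lt_succ_iff.mp (mem_range.mp hk))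
  · ext m
    simp only [coeff_reflect, finsetSum_coeff, coeff_X_pow, sum_ite_eq, mem_range]
    rcases le_or_gt m n with h | h
    · rw [revAt_le h]; simp [h]
    · rw [revAt_eq_self_of_lt h]

theorem degree_eq_of_mem_palindromic [Nontrivial R] {n : ℕ} {p : R[X]}
    (hp : p ∈ palindromic R n) (h0 : p.coeff 0 ≠ 0) : p.degree = n := by
  refine degree_eq_of_le_of_coeff_ne_zero hp.1 ?_
  rwa [← hp.2, coeff_reflect, revAt_le le_rfl, Nat.sub_self]

end CommSemiring

section Field

variable {K : Type*} [Field K]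

theorem eq_zero_of_mem_palindromic_of_coeff_eq_zero {n : ℕ} {p : K[X]}
    (hp : p ∈ palindromic K n) (hcoeff : ∀ j ≤ n / 2, p.coeff j = 0) : p = 0 := by
  ext k
  rw [coeff_zero]
  by_cases hk : k ≤ n / 2
  · exact hcoeff k hk
  by_cases hkn : k ≤ n
  · rw [← hp.2, coeff_reflect, revAt_le hkn]
    exact hcoeff _ (by omega)
  · exact coeff_eq_zero_of_degree_lt (hp.1.trans_lt (by exact_mod_cast not_le.mp hkn))

noncomputable def palindromicLowCoeffs (n : ℕ) :
    palindromic K n →ₗ[K] Fin (n / 2 + 1) → K :=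
  LinearMap.pi fun j => (lcoeff K j).comp (palindromic K n).subtype

theorem palindromicLowCoeffs_injective (n : ℕ) :
    Function.Injective (palindromicLowCoeffs (K := K) n) := by
  rw [← LinearMap.ker_eq_bot, LinearMap.ker_eq_bot']
  intro p hp
  exact Subtype.ext <| eq_zero_of_mem_palindromic_of_coeff_eq_zero p.2 fun j hj =>
    congrFun hp ⟨j, by omega⟩

instance (n : ℕ) : FiniteDimensional K (palindromic K n) :=
  Module.Finite.of_injective _ (palindromicLowCoeffs_injective n)

theorem finrank_palindromic_le (n : ℕ) : Module.finrank K (palindromic K n) ≤ n / 2 + 1 := by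
  simpa using LinearMap.finrank_le_finrank_of_injective (palindromicLowCoeffs_injective (K := K) n)

theorem linearIndependent_of_degree_injective {ι : Type*} {v : ι → K[X]} (hv : ∀ i, v i ≠ 0)
    (hdeg : Function.Injective fun i => (v i).degree) : LinearIndependent K v := by
  classical
  refine linearIndependent_iff'.mpr fun s g hsum i hi => ?_
  have hterm : ∀ i, g i ≠ 0 → (g i • v i).degree = (v i).degree := fun i hi =>
    degree_smul_of_smul_regular _ (IsSMulRegular.of_ne_zero hi)
  have hsup := degree_sum_eq_of_disjoint (fun i => g i • v i) s fun x hx y hy hxy => by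
    have hgx : g x ≠ 0 := left_ne_zero_of_smul hx.2
    have hgy : g y ≠ 0 := left_ne_zero_of_smul hy.2
    simpa [Function.onFun, hterm x hgx, hterm y hgy] using hdeg.ne hxy
  rw [hsum, degree_zero, eq_comm, Finset.sup_eq_bot_iff] at hsup
  by_contra hgi
  exact hv i (degree_eq_bot.mp (hterm i hgi ▸ hsup i hi))

theorem span_eq_palindromic {n : ℕ} {v : Fin (n / 2 + 1) → K[X]}
    (hv : ∀ j, v j ∈ palindromic K n) (hli : LinearIndependent K v) :
    Submodule.span K (Set.range v) = palindromic K n := by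
  refine Submodule.eq_of_le_of_finrank_le (Submodule.span_le.mpr ?_) ?_
  · rintro _ ⟨j, rfl⟩
    exact hv j
  · rw [finrank_span_eq_card hli, Fintype.card_fin]
    exact finrank_palindromic_le n

end Field

end Polynomial

theorem Ppoly_natCast (n i : ℕ) :
    Ppoly n i =
      (∑ k ∈ range (i + 1), X ^ k) ^ (n / i) * ∑ k ∈ range (n % i + 2), X ^ k := by
  simp [Ppoly]

theorem Ppoly_coeff_zero (d : ℤ) (i : ℕ) : (Ppoly d i).coeff 0 = 1 := by
  unfold Ppoly
  split_ifs <;> simp [coeff_zero_eq_eval_zero, eval_finsetSum]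

theorem Ppoly_mem_palindromic {d : ℤ} {m : ℕ} (i : ℕ) (hm : d + 1 = m) :
    Ppoly d i ∈ palindromic ℚ m := by
  rcases m with _ | n
  · simpa [Ppoly, show d = -1 by omega] using X_pow_mem_palindromic (R := ℚ) 0
  · have := mul_mem_palindromic
      (pow_mem_palindromic (geom_sum_X_mem_palindromic (R := ℚ) i) (n / i))
      (geom_sum_X_mem_palindromic (n % i + 1))
    rwa [← add_assoc, Nat.div_add_mod', ← Ppoly_natCast, ← show d = n by omega] at this

theorem Ppoly_sub_two_mul_mem_palindromic {d j : ℕ} (i : ℕ) (hj : 2 * j ≤ d + 1) :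
    Ppoly ((d : ℤ) - 2 * j) i ∈ palindromic ℚ (d + 1 - 2 * j) :=
  Ppoly_mem_palindromic i (by omega)

theorem X_pow_mul_Ppoly_mem_palindromic {d j : ℕ} (i : ℕ) (hj : 2 * j ≤ d + 1) :
    (X : ℚ[X]) ^ j * Ppoly ((d : ℤ) - 2 * j) i ∈ palindromic ℚ (d + 1) := by
  have := mul_mem_palindromic (X_pow_mem_palindromic j) (Ppoly_sub_two_mul_mem_palindromic i hj)
  rwa [Nat.add_sub_cancel' hj] at this

theorem degree_X_pow_mul_Ppoly {d j : ℕ} (i : ℕ) (hj : 2 * j ≤ d + 1) :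
    ((X : ℚ[X]) ^ j * Ppoly ((d : ℤ) - 2 * j) i).degree = (d + 1 - j : ℕ) := by
  rw [degree_mul, degree_X_pow, degree_eq_of_mem_palindromic
    (Ppoly_sub_two_mul_mem_palindromic i hj) (by simp [Ppoly_coeff_zero])]
  norm_cast
  omega

theorem Ppoly_basis_symmetric_general (d i : ℕ) :
    LinearIndependent ℚ
      (fun j : Fin ((d + 1) / 2 + 1) =>
        (X : ℚ[X]) ^ (j : ℕ) * Ppoly ((d : ℤ) - 2 * (j : ℕ)) i) ∧
    (Submodule.span ℚ (Set.range (fun j : Fin ((d + 1) / 2 + 1) =>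
        (X : ℚ[X]) ^ (j : ℕ) * Ppoly ((d : ℤ) - 2 * (j : ℕ)) i)) : Set ℚ[X]) =
      {h : ℚ[X] | h.degree ≤ (d + 1 : ℕ) ∧ h.reflect (d + 1) = h} := by
  have hj (j : Fin ((d + 1) / 2 + 1)) : 2 * (j : ℕ) ≤ d + 1 := by omega
  have hli : LinearIndependent ℚ fun j : Fin ((d + 1) / 2 + 1) =>
      (X : ℚ[X]) ^ (j : ℕ) * Ppoly ((d : ℤ) - 2 * (j : ℕ)) i := by
    refine linearIndependent_of_degree_injective (fun j h0 => ?_) fun j k hjk => ?_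
    · simpa [h0] using degree_X_pow_mul_Ppoly i (hj j)
    · simp only [degree_X_pow_mul_Ppoly i (hj _), Nat.cast_inj] at hjk
      exact Fin.ext (by have := hj j; have := hj k; omega)
  exact ⟨hli, congrArg SetLike.coe
    (span_eq_palindromic (fun j => X_pow_mul_Ppoly_mem_palindromic i (hj j)) hli)⟩

/-- the family `B_{d,i} = (t^j P_{d-2j,i})_{0 ≤ j ≤ ⌊(d+1)/2⌋}` in `ℚ[t]` is
linearly independent over `ℚ`, and its span is exactly the set of polynomials of degree at
most `d + 1` that are symmetric with axis of symmetry at degree `(d+1)/2`, i.e. whose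
reversal with respect to degree `d + 1` (`Polynomial.reflect (d+1)`) equals themselves. -/
theorem Ppoly_basis_symmetric (d i : ℕ) (hi : 1 ≤ i) :
    LinearIndependent ℚ
      (fun j : Fin ((d + 1) / 2 + 1) =>
        (X : ℚ[X]) ^ (j : ℕ) * Ppoly ((d : ℤ) - 2 * (j : ℕ)) i) ∧
    (Submodule.span ℚ (Set.range (fun j : Fin ((d + 1) / 2 + 1) =>
        (X : ℚ[X]) ^ (j : ℕ) * Ppoly ((d : ℤ) - 2 * (j : ℕ)) i)) : Set ℚ[X]) =
      {h : ℚ[X] | h.degree ≤ (d + 1 : ℕ) ∧ h.reflect (d + 1) = h} :=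
  Ppoly_basis_symmetric_general d i
end
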